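/- Let c, s, τ be positive integers with 1 ≤ τ ≤ s, set d = c·s and s₁ = max(1, s−1). Let A be an n×d real matrix with no zero rows, and let f : ℝ^d → ℝ be a differentiable convex function such that f(x+h) ≤ f(x) + ⟨∇f(x), h⟩ + (1/2) hᵀAᵀA h for all x, h ∈ ℝ^d. With ω_j, ω'_j, α*_j and D¹_ii as in Theorem 2 of the paper (α*_j = 1 + (τ−1)(ω_j−1)/s₁ + (τ/s − (τ−1)/s₁)·((ω'_j−1)/ω'_j)·ω_j and D¹_ii = ∑_j α*_j A_{ji}²), it holds for all x, h ∈ ℝ^d that the average over all distributed samplings of f(x + h^Ŝ) is at most f(x) + (τ/s)·(⟨∇f(x), h⟩ + (1/2) ∑_{i=1}^d D¹_ii h_i²). -/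

import Mathlib

open Finset

/-- The finite set of all distributed samplings: tuples `S = (S_1,…,S_c)` where
each `S_l` is a `τ`-element subset of the block `{1,…,s}`. -/
def samplings (c s τ : ℕ) : Finset (Fin c → Finset (Fin s)) :=
  Finset.univ.filter fun S => ∀ l, (S l).card = τ

/-- `h^Ŝ`: the vector agreeing with `h` on `Ŝ = {(l,i) : i ∈ S_l}` and `0` elsewhere. -/
def restr {c s : ℕ} (S : Fin c → Finset (Fin s)) (x : Fin c × Fin s → ℝ) :
    Fin c × Fin s → ℝ :=
  fun p => if p.2 ∈ S p.1 then x p else 0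

/-!
Taking the expectation of the quadratic upper bound at `h^Ŝ` leaves, for each row `j`, the
second moment of `∑ₚ g_p [p ∈ Ŝ]` with `g_p = A_{jp} h_p`. The blocks `S_l` are independent
uniform `τ`-subsets, and inside a block a fixed point, resp. a fixed pair of points, is covered
with probability `τ/s`, resp. `τ(τ-1)/(s(s-1))`. So the second moment is an explicit combination
of `∑ g_p²`, `∑_l (∑_i g_{l,i})²` and `(∑ g_p)²`, and Cauchy–Schwarz over the `ω_j` nonzero
coordinates and the `ω'_j` nonzero blocks of the row bounds it by `(τ/s) α*_j ∑ g_p²`.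
-/

open scoped BigOperators

theorem sum_sum_ite_eq_add {ι R : Type*} [Fintype ι] [DecidableEq ι] [CommRing R]
    (d b : ι → ι → R) :
    ∑ i, ∑ j, (if i = j then d i j else b i j) =
      ∑ i, d i i + (∑ i, ∑ j, b i j - ∑ i, b i i) := by
  have hsplit : ∀ i j,
      (if i = j then d i j else b i j) = (if i = j then d i j - b i j else 0) + b i j := by
    intro i j
    split_ifs <;> ring
  simp only [hsplit, sum_add_distrib, sum_ite_eq, mem_univ, if_true, sum_sub_distrib]
  ring

theorem sq_sum_le_card_mul_sum_sq_of_support_subset {ι : Type*} [Fintype ι] {g : ι → ℝ}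
    {P : Finset ι} (hP : ∀ i, g i ≠ 0 → i ∈ P) : (∑ i, g i) ^ 2 ≤ #P * ∑ i, g i ^ 2 := by
  have hzero : ∀ i ∉ P, g i = 0 := fun i hi => by_contra fun hg => hi (hP i hg)
  rw [← sum_subset (subset_univ P) fun i _ hi => hzero i hi,
    ← sum_subset (subset_univ P) fun i _ hi => by simp [hzero i hi]]
  exact sq_sum_le_card_mul_sum_sq

theorem sub_le_sub_one_div_mul {x y z : ℝ} {m : ℕ} (hy : 0 ≤ y) (hxy : x ≤ m * y)
    (hxz : x ≤ z) :
    x - y ≤ (m - 1) / m * z := by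
  rcases Nat.eq_zero_or_pos m with rfl | hm
  · simp only [CharP.cast_eq_zero, zero_mul, div_zero] at hxy ⊢
    linarith
  · have hm' : (1 : ℝ) ≤ m := by exact_mod_cast hm
    calc x - y ≤ x - x / m := by
          rw [sub_le_sub_iff_left, div_le_iff₀ (by linarith)]
          linarith
      _ = (m - 1) / m * x := by field_simp
      _ ≤ (m - 1) / m * z := by gcongr

section RandomSubset

variable {ι : Type*} [Fintype ι] [DecidableEq ι]

theorem card_filter_powersetCard_subset_mul_descFactorial (u : Finset ι) (n : ℕ) :
    #{T ∈ powersetCard n univ | u ⊆ T} * (Fintype.card ι).descFactorial #u =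
      n.descFactorial #u * (Fintype.card ι).choose n := by
  rcases lt_or_ge n #u with hnu | hun
  · have hempty : {T ∈ powersetCard n (univ : Finset ι) | u ⊆ T} = ∅ :=
      filter_eq_empty_iff.2 fun T hT huT => by
        have := card_le_card huT
        rw [mem_powersetCard_univ.1 hT] at this
        omega
    rw [hempty, Nat.descFactorial_eq_zero_iff_lt.2 hnu]
    simp
  rcases le_or_gt n (Fintype.card ι) with hns | hsn
  · rw [card_filter_powersetCard_subset u univ n (subset_univ u) hun, card_univ,
      Nat.descFactorial_eq_factorial_mul_choose, Nat.descFactorial_eq_factorial_mul_choose,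
      mul_assoc, mul_comm (n.choose #u), Nat.choose_mul hun]
    ring
  · rw [powersetCard_eq_empty.2 (by rwa [card_univ]), Nat.choose_eq_zero_of_lt hsn]
    simp

theorem expect_powersetCard_indicator_subset {n : ℕ} (hn : n ≤ Fintype.card ι)
    (u : Finset ι) :
    𝔼 T ∈ powersetCard n univ, (if u ⊆ T then (1 : ℝ) else 0) =
      n.descFactorial #u / (Fintype.card ι).descFactorial #u := by
  have hchoose : ((Fintype.card ι).choose n : ℝ) ≠ 0 :=
    Nat.cast_ne_zero.2 (Nat.choose_pos hn).ne'
  have hdesc : ((Fintype.card ι).descFactorial #u : ℝ) ≠ 0 :=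
    Nat.cast_ne_zero.2 fun h => (Nat.descFactorial_eq_zero_iff_lt.1 h).not_ge (card_le_univ u)
  rw [expect_eq_sum_div_card, sum_boole, card_powersetCard, card_univ,
    div_eq_div_iff hchoose hdesc]
  exact_mod_cast card_filter_powersetCard_subset_mul_descFactorial u n

theorem expect_powersetCard_indicator_mem {n : ℕ} (hn : n ≤ Fintype.card ι) (i : ι) :
    𝔼 T ∈ powersetCard n univ, (if i ∈ T then (1 : ℝ) else 0) = n / Fintype.card ι := by
  simpa using expect_powersetCard_indicator_subset hn {i}

theorem expect_powersetCard_indicator_mem_mul {n : ℕ} (hn : n ≤ Fintype.card ι) (i j : ι) :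
    𝔼 T ∈ powersetCard n univ,
        (if i ∈ T then (1 : ℝ) else 0) * (if j ∈ T then (1 : ℝ) else 0) =
      if i = j then (n : ℝ) / Fintype.card ι
      else (n : ℝ) * (n - 1) / (Fintype.card ι * (Fintype.card ι - 1)) := by
  have hind : ∀ T : Finset ι, (if i ∈ T then (1 : ℝ) else 0) * (if j ∈ T then 1 else 0) =
      if {i, j} ⊆ T then 1 else 0 := by
    intro T
    simp only [insert_subset_iff, singleton_subset_iff]
    split_ifs <;> simp_all
  rw [expect_congr rfl fun T _ => hind T, expect_powersetCard_indicator_subset hn]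
  split_ifs with hij
  · subst hij
    simp
  · rw [card_pair hij, Nat.cast_descFactorial_two, Nat.cast_descFactorial_two]

theorem sum_mem_eq_sum_mul_indicator (T : Finset ι) (a : ι → ℝ) :
    ∑ i ∈ T, a i = ∑ i, a i * (if i ∈ T then 1 else 0) := by
  simp [mul_ite]

theorem expect_powersetCard_sum_mem {n : ℕ} (hn : n ≤ Fintype.card ι) (a : ι → ℝ) :
    𝔼 T ∈ powersetCard n univ, ∑ i ∈ T, a i = n / Fintype.card ι * ∑ i, a i := by
  rw [expect_congr rfl fun T _ => sum_mem_eq_sum_mul_indicator T a, expect_sum_comm]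
  simp_rw [← mul_expect, expect_powersetCard_indicator_mem hn, mul_sum, mul_comm]

theorem expect_powersetCard_sq_sum_mem {n : ℕ} (hn : n ≤ Fintype.card ι) (a : ι → ℝ) :
    𝔼 T ∈ powersetCard n univ, (∑ i ∈ T, a i) ^ 2 =
      n / Fintype.card ι * ∑ i, a i ^ 2 +
        n * (n - 1) / (Fintype.card ι * (Fintype.card ι - 1)) *
          ((∑ i, a i) ^ 2 - ∑ i, a i ^ 2) := by
  have hsq : ∀ T : Finset ι, (∑ i ∈ T, a i) ^ 2 = ∑ i, ∑ j,
      a i * a j * ((if i ∈ T then (1 : ℝ) else 0) * (if j ∈ T then 1 else 0)) := by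
    intro T
    rw [sum_mem_eq_sum_mul_indicator, sq, sum_mul_sum]
    exact sum_congr rfl fun i _ => sum_congr rfl fun j _ => by ring
  rw [expect_congr rfl fun T _ => hsq T, expect_sum_comm]
  simp_rw [expect_sum_comm, ← mul_expect, expect_powersetCard_indicator_mem_mul hn, mul_ite]
  rw [sum_sum_ite_eq_add]
  simp only [← sum_mul, sq, sum_mul_sum]
  ring

end RandomSubset

section Independence

variable {ι κ K : Type*} [Fintype ι] [DecidableEq ι] [Semifield K] [CharZero K]

theorem expect_piFinset_prod (t : ι → Finset κ) (g : ι → κ → K) :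
    𝔼 x ∈ Fintype.piFinset t, ∏ i, g i (x i) = ∏ i, 𝔼 y ∈ t i, g i y := by
  simp only [expect_eq_sum_div_card, ← prod_univ_sum, Fintype.card_piFinset, Nat.cast_prod,
    prod_div_distrib]

variable {t : ι → Finset κ}

theorem expect_piFinset_apply (ht : ∀ i, (t i).Nonempty) (l : ι) (F : κ → K) :
    𝔼 x ∈ Fintype.piFinset t, F (x l) = 𝔼 y ∈ t l, F y := by
  have := expect_piFinset_prod t fun i y => if i = l then F y else 1
  simp only [Fintype.prod_ite_eq'] at this
  rw [this, ← Fintype.prod_ite_eq' l fun i => 𝔼 y ∈ t i, F y]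
  refine prod_congr rfl fun i _ => ?_
  split_ifs <;> simp [ht i]

theorem expect_piFinset_apply_mul_apply (ht : ∀ i, (t i).Nonempty) {l l' : ι} (hl : l ≠ l')
    (F G : κ → K) :
    𝔼 x ∈ Fintype.piFinset t, F (x l) * G (x l') = (𝔼 y ∈ t l, F y) * 𝔼 y ∈ t l', G y := by
  have := expect_piFinset_prod t fun i y =>
    (if i = l then F y else 1) * (if i = l' then G y else 1)
  simp only [prod_mul_distrib, Fintype.prod_ite_eq'] at this
  rw [this, ← Fintype.prod_ite_eq' l fun i => 𝔼 y ∈ t i, F y,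
    ← Fintype.prod_ite_eq' l' fun i => 𝔼 y ∈ t i, G y, ← prod_mul_distrib]
  refine prod_congr rfl fun i _ => ?_
  by_cases hil : i = l
  · subst hil
    simp [hl]
  · split_ifs <;> simp [ht i]

end Independence

section Samplings

variable {c s τ : ℕ}

theorem samplings_eq_piFinset :
    samplings c s τ = Fintype.piFinset fun _ => powersetCard τ univ := by
  ext S
  simp [samplings]

theorem card_samplings : #(samplings c s τ) = s.choose τ ^ c := by
  simp [samplings_eq_piFinset]

theorem powersetCard_nonempty_of_le (hτs : τ ≤ s) :
    (powersetCard τ (univ : Finset (Fin s))).Nonempty :=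
  powersetCard_nonempty.2 (by simpa using hτs)

theorem samplings_nonempty (hτs : τ ≤ s) : (samplings c s τ).Nonempty := by
  rw [samplings_eq_piFinset]
  exact Fintype.piFinset_nonempty.2 fun _ => powersetCard_nonempty_of_le hτs

theorem sum_restr (S : Fin c → Finset (Fin s)) (g : Fin c × Fin s → ℝ) :
    ∑ p, restr S g p = ∑ l, ∑ i ∈ S l, g (l, i) := by
  simp [restr, Fintype.sum_prod_type]

theorem expect_restr (hτs : τ ≤ s) (h : Fin c × Fin s → ℝ) :
    𝔼 S ∈ samplings c s τ, restr S h = ((τ : ℝ) / s) • h := by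
  ext p
  have hrestr : ∀ S : Fin c → Finset (Fin s),
      restr S h p = h p * (if p.2 ∈ S p.1 then 1 else 0) := by
    simp [restr]
  rw [expect_apply, expect_congr rfl fun S _ => hrestr S, ← mul_expect, samplings_eq_piFinset,
    expect_piFinset_apply (fun _ => powersetCard_nonempty_of_le hτs) p.1
      fun T => if p.2 ∈ T then (1 : ℝ) else 0,
    expect_powersetCard_indicator_mem (by simpa using hτs)]
  simp [mul_comm]

theorem expect_sq_sum_restr (hτs : τ ≤ s) (g : Fin c × Fin s → ℝ) :
    𝔼 S ∈ samplings c s τ, (∑ p, restr S g p) ^ 2 =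
      τ / s * ∑ p, g p ^ 2
        + τ * (τ - 1) / (s * (s - 1)) * (∑ l, (∑ i, g (l, i)) ^ 2 - ∑ p, g p ^ 2)
        + (τ / s) ^ 2 * ((∑ p, g p) ^ 2 - ∑ l, (∑ i, g (l, i)) ^ 2) := by
  set Y : Fin c → Finset (Fin s) → ℝ := fun l T => ∑ i ∈ T, g (l, i)
  have hsq : ∀ S : Fin c → Finset (Fin s),
      (∑ p, restr S g p) ^ 2 = ∑ l, ∑ l', Y l (S l) * Y l' (S l') := by
    intro S
    rw [sum_restr, sq, sum_mul_sum]
  have hne : ∀ _ : Fin c, (powersetCard τ (univ : Finset (Fin s))).Nonempty :=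
    fun _ => powersetCard_nonempty_of_le hτs
  have hpair : ∀ l l', 𝔼 S ∈ samplings c s τ, Y l (S l) * Y l' (S l') =
      if l = l' then 𝔼 T ∈ powersetCard τ univ, Y l T ^ 2
      else (𝔼 T ∈ powersetCard τ univ, Y l T) * 𝔼 T ∈ powersetCard τ univ, Y l' T := by
    intro l l'
    rw [samplings_eq_piFinset]
    split_ifs with hl
    · subst hl
      simp_rw [← sq]
      exact expect_piFinset_apply hne l fun T => Y l T ^ 2
    · exact expect_piFinset_apply_mul_apply hne hl _ _
  have hτs' : τ ≤ Fintype.card (Fin s) := by simpa using hτs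
  rw [expect_congr rfl fun S _ => hsq S, expect_sum_comm]
  simp_rw [expect_sum_comm, hpair]
  rw [sum_sum_ite_eq_add]
  simp only [Y, expect_powersetCard_sq_sum_mem hτs', expect_powersetCard_sum_mem hτs',
    Fintype.card_fin]
  rw [← sum_mul_sum, ← sq]
  simp only [← sq, mul_pow, ← mul_sum, Fintype.sum_prod_type, sum_add_distrib, sum_sub_distrib]
  ring

theorem mul_div_mul_sub_one_eq (hτs : τ ≤ s) :
    (τ : ℝ) * ((τ : ℝ) - 1) / ((s : ℝ) * ((s : ℝ) - 1)) =
      (τ : ℝ) / (s : ℝ) * (((τ : ℝ) - 1) / ((max 1 (s - 1) : ℕ) : ℝ)) := by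
  rcases le_or_gt 2 s with hs | hs
  · rw [max_eq_right (by omega), Nat.cast_sub (by omega), Nat.cast_one, mul_div_mul_comm]
  · interval_cases s <;> interval_cases τ <;> simp

theorem sub_one_div_le_div (hτs : τ ≤ s) :
    ((τ : ℝ) - 1) / ((max 1 (s - 1) : ℕ) : ℝ) ≤ (τ : ℝ) / (s : ℝ) := by
  rcases le_or_gt 2 s with hs | hs
  · have hs' : (2 : ℝ) ≤ s := by exact_mod_cast hs
    have hτs' : (τ : ℝ) ≤ s := by exact_mod_cast hτs
    rw [max_eq_right (by omega), Nat.cast_sub (by omega), Nat.cast_one,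
      div_le_div_iff₀ (by linarith) (by linarith)]
    nlinarith
  · interval_cases s <;> interval_cases τ <;> norm_num

end Samplings

noncomputable def alphaStar (s τ ω ω' : ℕ) : ℝ :=
  1 + ((τ : ℝ) - 1) * ((ω : ℝ) - 1) / ((max 1 (s - 1) : ℕ) : ℝ)
    + ((τ : ℝ) / (s : ℝ) - ((τ : ℝ) - 1) / ((max 1 (s - 1) : ℕ) : ℝ)) *
        (((ω' : ℝ) - 1) / (ω' : ℝ)) * (ω : ℝ)

theorem expect_sq_sum_restr_le {c s τ : ℕ} (hτ : 1 ≤ τ) (hτs : τ ≤ s) {g : Fin c × Fin s → ℝ}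
    {P : Finset (Fin c × Fin s)} (hP : ∀ p, g p ≠ 0 → p ∈ P)
    {B : Finset (Fin c)} (hB : ∀ p, g p ≠ 0 → p.1 ∈ B) :
    𝔼 S ∈ samplings c s τ, (∑ p, restr S g p) ^ 2 ≤
      τ / s * alphaStar s τ #P #B * ∑ p, g p ^ 2 := by
  set r : ℝ := ((τ : ℝ) - 1) / ((max 1 (s - 1) : ℕ) : ℝ)
  have hTQ : (∑ p, g p) ^ 2 ≤ #P * ∑ p, g p ^ 2 :=
    sq_sum_le_card_mul_sum_sq_of_support_subset hP
  have hTS : (∑ p, g p) ^ 2 ≤ #B * ∑ l, (∑ i, g (l, i)) ^ 2 := by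
    rw [Fintype.sum_prod_type]
    refine sq_sum_le_card_mul_sum_sq_of_support_subset fun l hl => ?_
    obtain ⟨i, -, hi⟩ := exists_ne_zero_of_sum_ne_zero hl
    exact hB (l, i) hi
  have hr : 0 ≤ r := div_nonneg (by simpa using hτ) (Nat.cast_nonneg _)
  have hrp : r ≤ τ / s := sub_one_div_le_div hτs
  rw [expect_sq_sum_restr hτs, mul_div_mul_sub_one_eq hτs, alphaStar]
  calc τ / s * ∑ p, g p ^ 2 + τ / s * r * (∑ l, (∑ i, g (l, i)) ^ 2 - ∑ p, g p ^ 2)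
          + (τ / s) ^ 2 * ((∑ p, g p) ^ 2 - ∑ l, (∑ i, g (l, i)) ^ 2)
        = τ / s * (∑ p, g p ^ 2 + r * ((∑ p, g p) ^ 2 - ∑ p, g p ^ 2)
          + (τ / s - r) * ((∑ p, g p) ^ 2 - ∑ l, (∑ i, g (l, i)) ^ 2)) := by ring
    _ ≤ τ / s * (∑ p, g p ^ 2 + r * ((#P - 1) * ∑ p, g p ^ 2)
          + (τ / s - r) * ((#B - 1) / #B * (#P * ∑ p, g p ^ 2))) := by
        gcongr
        · linarith
        · exact sub_le_sub_one_div_mul (sum_nonneg fun l _ => sq_nonneg _) hTS hTQ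
    _ = _ := by ring

theorem expect_sq_sum_mul_restr_le {c s τ : ℕ} (hτ : 1 ≤ τ) (hτs : τ ≤ s)
    (a h : Fin c × Fin s → ℝ) :
    𝔼 S ∈ samplings c s τ, (∑ p, a p * restr S h p) ^ 2 ≤
      τ / s * alphaStar s τ #{p | a p ≠ 0} #{l | ∃ i, a (l, i) ≠ 0} *
        ∑ p, a p ^ 2 * h p ^ 2 := by
  have hrestr : ∀ S p, a p * restr S h p = restr S (fun q => a q * h q) p := fun S p => by
    simp [restr]
  simp_rw [hrestr, ← mul_pow]
  exact expect_sq_sum_restr_le hτ hτs (fun p hp => by simpa using left_ne_zero_of_mul hp)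
    fun p hp => by simpa using ⟨p.2, left_ne_zero_of_mul hp⟩

theorem stmt_6_general (c s τ : ℕ) (hτ : 1 ≤ τ) (hτs : τ ≤ s)
    (n : ℕ) (A : Matrix (Fin n) (Fin c × Fin s) ℝ)
    (f : (Fin c × Fin s → ℝ) → ℝ)
    (hquad : ∀ x h : Fin c × Fin s → ℝ,
      f (x + h) ≤ f x + fderiv ℝ f x h +
        (1 / 2) * ∑ j : Fin n, (∑ p : Fin c × Fin s, A j p * h p) ^ 2)
    (ω ω' : Fin n → ℕ)
    (hω : ∀ j, ω j = (Finset.univ.filter fun p : Fin c × Fin s => A j p ≠ 0).card)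
    (hω' : ∀ j, ω' j = (Finset.univ.filter fun l : Fin c => ∃ i : Fin s, A j (l, i) ≠ 0).card)
    (x h : Fin c × Fin s → ℝ) :
    (∑ S ∈ samplings c s τ, f (x + restr S h)) / ((s.choose τ : ℝ) ^ c) ≤
      f x + ((τ : ℝ) / (s : ℝ)) *
        (fderiv ℝ f x h +
          (1 / 2) * ∑ p : Fin c × Fin s,
            (∑ j : Fin n,
              (1 + ((τ : ℝ) - 1) * ((ω j : ℝ) - 1) / ((max 1 (s - 1) : ℕ) : ℝ)
                + ((τ : ℝ) / (s : ℝ) - ((τ : ℝ) - 1) / ((max 1 (s - 1) : ℕ) : ℝ)) *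
                    (((ω' j : ℝ) - 1) / (ω' j : ℝ)) * (ω j : ℝ)) * (A j p) ^ 2) *
            (h p) ^ 2) := by
  set L := fderiv ℝ f x
  have hswap : ∑ j, τ / s * alphaStar s τ (ω j) (ω' j) * ∑ p, A j p ^ 2 * h p ^ 2 =
      τ / s * ∑ p, (∑ j, alphaStar s τ (ω j) (ω' j) * A j p ^ 2) * h p ^ 2 := by
    simp only [mul_sum, sum_mul]
    rw [sum_comm]
    exact sum_congr rfl fun _ _ => sum_congr rfl fun _ _ => by ring
  rw [← Nat.cast_pow, ← card_samplings, ← expect_eq_sum_div_card]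
  calc 𝔼 S ∈ samplings c s τ, f (x + restr S h)
      ≤ 𝔼 S ∈ samplings c s τ,
          (f x + L (restr S h) + 1 / 2 * ∑ j, (∑ p, A j p * restr S h p) ^ 2) :=
        expect_le_expect fun S _ => hquad x (restr S h)
    _ = f x + L (𝔼 S ∈ samplings c s τ, restr S h)
          + 1 / 2 * ∑ j, 𝔼 S ∈ samplings c s τ, (∑ p, A j p * restr S h p) ^ 2 := by
        have hL :
            𝔼 S ∈ samplings c s τ, L (restr S h) = L (𝔼 S ∈ samplings c s τ, restr S h) :=
          (map_expect (L.restrictScalars ℚ≥0) _ _).symm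
        rw [expect_add_distrib, expect_add_distrib, expect_const (samplings_nonempty hτs),
          ← mul_expect, expect_sum_comm, hL]
    _ ≤ f x + L ((τ / s : ℝ) • h)
          + 1 / 2 * ∑ j, τ / s * alphaStar s τ (ω j) (ω' j) * ∑ p, A j p ^ 2 * h p ^ 2 := by
        rw [expect_restr hτs]
        gcongr with j
        rw [hω j, hω' j]
        exact expect_sq_sum_mul_restr_le hτ hτs (A j) h
    _ = _ := by
        rw [map_smul, smul_eq_mul, hswap]
        unfold alphaStar
        ring

/-- Theorem 2 of the paper: the full ESO for the new stepsizes `D¹`.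
Coordinates are indexed by `(l,i) ∈ Fin c × Fin s`, `d = c·s`, `s₁ = max(1,s−1)`.
Let `f : ℝ^d → ℝ` be differentiable and convex with
`f(x+h) ≤ f(x) + ⟨∇f(x),h⟩ + (1/2) hᵀAᵀAh`, where the `n×d` matrix `A` has no
zero rows.  With `ω_j, ω'_j, α*_j` and `D¹_ii = ∑_j α*_j A_{ji}²` as in the
paper, for all `x, h ∈ ℝ^d` the average over all distributed samplings of
`f(x + h^Ŝ)` is at most `f(x) + (τ/s)·(⟨∇f(x),h⟩ + (1/2)·∑_i D¹_ii h_i²)`. -/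
theorem stmt_6 (c s τ : ℕ) (hc : 0 < c) (hs : 0 < s) (hτ : 1 ≤ τ) (hτs : τ ≤ s)
    (n : ℕ) (A : Matrix (Fin n) (Fin c × Fin s) ℝ)
    (hrows : ∀ j : Fin n, ∃ p : Fin c × Fin s, A j p ≠ 0)
    (f : (Fin c × Fin s → ℝ) → ℝ)
    (hdiff : Differentiable ℝ f)
    (hconv : ConvexOn ℝ Set.univ f)
    (hquad : ∀ x h : Fin c × Fin s → ℝ,
      f (x + h) ≤ f x + fderiv ℝ f x h +
        (1 / 2) * ∑ j : Fin n, (∑ p : Fin c × Fin s, A j p * h p) ^ 2)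
    (ω ω' : Fin n → ℕ)
    (hω : ∀ j, ω j = (Finset.univ.filter fun p : Fin c × Fin s => A j p ≠ 0).card)
    (hω' : ∀ j, ω' j = (Finset.univ.filter fun l : Fin c => ∃ i : Fin s, A j (l, i) ≠ 0).card)
    (x h : Fin c × Fin s → ℝ) :
    (∑ S ∈ samplings c s τ, f (x + restr S h)) / ((s.choose τ : ℝ) ^ c) ≤
      f x + ((τ : ℝ) / (s : ℝ)) *
        (fderiv ℝ f x h +
          (1 / 2) * ∑ p : Fin c × Fin s,
            (∑ j : Fin n,
              (1 + ((τ : ℝ) - 1) * ((ω j : ℝ) - 1) / ((max 1 (s - 1) : ℕ) : ℝ)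
                + ((τ : ℝ) / (s : ℝ) - ((τ : ℝ) - 1) / ((max 1 (s - 1) : ℕ) : ℝ)) *
                    (((ω' j : ℝ) - 1) / (ω' j : ℝ)) * (ω j : ℝ)) * (A j p) ^ 2) *
            (h p) ^ 2) :=
  stmt_6_general c s τ hτ hτs n A f hquad ω ω' hω hω' x h
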